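/- Let G be a topological group acting continuously and freely on a topological space X. The action is proper (i.e., the map X × G → X × X, (x,g) ↦ (x, x·g), is a proper map) if and only if the quotient space X/G is Hausdorff and the translation map τ : X ×_G X → G is continuous. -/

import Mathlib

/-!
The map `(x, g) ↦ (x, g • x)` factors as the continuous bijection
`X × G → X ×_G X` followed by the inclusion `X ×_G X ⊆ X × X`, and the inverse of the
bijection is `q ↦ (q.1, τ q)`. The inclusion is a closed embedding exactly when the orbit
relation is closed, i.e. when `X/G` is Hausdorff (the quotient map of a group action is open),
and a continuous bijection is proper exactly when it is a homeomorphism, i.e. when `τ` is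
continuous.
-/

open Topology

namespace MulAction

variable {G X : Type*} [Group G] [MulAction G X]

variable (G X) in
/-- The fibred product `X ×_G X` over `X/G`. -/
abbrev OrbitPairs : Type _ := {q : X × X // q.2 ∈ orbit G q.1}

def toOrbitPairs (p : X × G) : OrbitPairs G X :=
  ⟨(p.1, p.2 • p.1), p.2, rfl⟩

theorem translation_smul_fst (τ : OrbitPairs G X → G)
    (hτ : ∀ (x : X) (g : G), τ ⟨(x, g • x), g, rfl⟩ = g) (q : OrbitPairs G X) :
    τ q • q.1.1 = q.1.2 := by
  obtain ⟨⟨x, y⟩, g, hg⟩ := q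
  change g • x = y at hg
  subst hg
  exact congrArg (· • x) (hτ x g)

def orbitPairsEquiv (τ : OrbitPairs G X → G)
    (hτ : ∀ (x : X) (g : G), τ ⟨(x, g • x), g, rfl⟩ = g) : X × G ≃ OrbitPairs G X where
  toFun := toOrbitPairs
  invFun q := (q.1.1, τ q)
  left_inv p := by simp only [toOrbitPairs, hτ]
  right_inv q := Subtype.ext (by simp only [toOrbitPairs, translation_smul_fst τ hτ q])

variable [TopologicalSpace X]

theorem isClosed_setOf_mem_orbit [T2Space (Quotient (orbitRel G X))] :
    IsClosed {q : X × X | q.2 ∈ orbit G q.1} := by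
  have hrel : {q : X × X | q.2 ∈ orbit G q.1} =
      {q | (⟦q.2⟧ : Quotient (orbitRel G X)) = ⟦q.1⟧} := by
    ext q
    exact (Quotient.eq (r := orbitRel G X)).symm
  rw [hrel]
  exact isClosed_eq (continuous_quotient_mk'.comp continuous_snd)
    (continuous_quotient_mk'.comp continuous_fst)

variable [TopologicalSpace G]

theorem properSMul_iff_isProperMap_prodMk_smul :
    ProperSMul G X ↔ IsProperMap (fun p : X × G => (p.1, p.2 • p.1)) := by
  have hswap : (fun p : X × G => (p.1, p.2 • p.1)) =
      Prod.swap ∘ (fun gx : G × X => (gx.1 • gx.2, gx.2)) ∘ Prod.swap := rfl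
  have hswap' : (fun gx : G × X => (gx.1 • gx.2, gx.2)) =
      Prod.swap ∘ (fun p : X × G => (p.1, p.2 • p.1)) ∘ Prod.swap := rfl
  rw [properSMul_iff]
  refine ⟨fun h => ?_, fun h => ?_⟩
  · rw [hswap]
    exact (Homeomorph.prodComm X X).isProperMap.comp (h.comp (Homeomorph.prodComm X G).isProperMap)
  · rw [hswap']
    exact (Homeomorph.prodComm X X).isProperMap.comp (h.comp (Homeomorph.prodComm G X).isProperMap)

theorem isProperMap_prodMk_smul_iff :
    IsProperMap (fun p : X × G => (p.1, p.2 • p.1)) ↔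
      T2Space (Quotient (orbitRel G X)) ∧ IsProperMap (toOrbitPairs (G := G) (X := X)) := by
  refine ⟨fun hp => ⟨?_, ?_⟩, fun ⟨_, hp⟩ => ?_⟩
  · have := properSMul_iff_isProperMap_prodMk_smul.mpr hp
    infer_instance
  · exact isProperMap_of_comp_of_inj (hp.continuous.subtype_mk _) continuous_subtype_val hp
      Subtype.val_injective
  · exact isClosed_setOf_mem_orbit.isClosedEmbedding_subtypeVal.isProperMap.comp hp

theorem isProperMap_toOrbitPairs_iff [ContinuousSMul G X] (τ : OrbitPairs G X → G)
    (hτ : ∀ (x : X) (g : G), τ ⟨(x, g • x), g, rfl⟩ = g) :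
    IsProperMap (toOrbitPairs (G := G) (X := X)) ↔ Continuous τ := by
  have hcont : Continuous (toOrbitPairs (G := G) (X := X)) := by
    unfold toOrbitPairs
    fun_prop
  refine ⟨fun hp => ?_, fun hτc => ?_⟩
  · let e := (orbitPairsEquiv τ hτ).toHomeomorphOfContinuousClosed hcont hp.isClosedMap
    exact continuous_snd.comp e.symm.continuous
  · let e : X × G ≃ₜ OrbitPairs G X :=
      { orbitPairsEquiv τ hτ with
        continuous_toFun := hcont
        continuous_invFun := continuous_subtype_val.fst.prodMk hτc }
    exact e.isProperMap

end MulAction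

open MulAction in
theorem proper_iff_t2_quotient_and_translation_continuous_general {G X : Type*} [Group G]
    [MulAction G X] [TopologicalSpace G] [TopologicalSpace X]
    (hcont : Continuous (fun p : X × G => p.2 • p.1))
    (τ : {q : X × X // q.2 ∈ MulAction.orbit G q.1} → G)
    (hτ : ∀ (x : X) (g : G), τ ⟨(x, g • x), g, rfl⟩ = g) :
    IsProperMap (fun p : X × G => (p.1, p.2 • p.1)) ↔
    (T2Space (Quotient (MulAction.orbitRel G X)) ∧ Continuous τ) := by
  have : ContinuousSMul G X := ⟨hcont.comp continuous_swap⟩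
  rw [isProperMap_prodMk_smul_iff, isProperMap_toOrbitPairs_iff τ hτ]

/-- A continuous free action is proper (i.e. `(x,g) ↦ (x, g • x)` is a
proper map `X × G → X × X`) iff the quotient `X/G` is Hausdorff and the translation
map `τ : X ×_G X → G` is continuous. -/
theorem proper_iff_t2_quotient_and_translation_continuous {G X : Type*} [Group G]
    [MulAction G X] [TopologicalSpace G] [TopologicalSpace X] [IsTopologicalGroup G]
    (hcont : Continuous (fun p : X × G => p.2 • p.1))
    (hfree : ∀ (g : G) (x : X), g • x = x → g = 1)
    (τ : {q : X × X // q.2 ∈ MulAction.orbit G q.1} → G)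
    (hτ : ∀ (x : X) (g : G), τ ⟨(x, g • x), g, rfl⟩ = g) :
    IsProperMap (fun p : X × G => (p.1, p.2 • p.1)) ↔
    (T2Space (Quotient (MulAction.orbitRel G X)) ∧ Continuous τ) :=
  proper_iff_t2_quotient_and_translation_continuous_general hcont τ hτ
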